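/- Let D(S) be strongly connected. Then the polytope P(S) = {u ∈ R^{|S|} : B(D(S))u = 0, 1^T u = 1, u ≥ 0} has dimension |S| - |V(S)|, i.e., the affine span of P(S) has dimension equal to the nullity of the matrix A(S) obtained from B(D(S)) by appending the all-ones row. -/

import Mathlib

/-- Prefix of length `L` of an `(L+1)`-gram. -/
def pre (q L : ℕ) (z : Fin (L + 1) → Fin q) : Fin L → Fin q := fun i => z i.castSucc

/-- Suffix of length `L` of an `(L+1)`-gram. -/
def suf (q L : ℕ) (z : Fin (L + 1) → Fin q) : Fin L → Fin q := fun i => z i.succ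

/-- Node set of the restricted de Bruijn graph. -/
def VS (q L : ℕ) (S : Finset (Fin (L + 1) → Fin q)) : Finset (Fin L → Fin q) :=
  S.image (pre q L) ∪ S.image (suf q L)

/-- Arc relation of `D(S)`. -/
def step (q L : ℕ) (S : Finset (Fin (L + 1) → Fin q)) (a b : Fin L → Fin q) : Prop :=
  ∃ z ∈ S, pre q L z = a ∧ suf q L z = b

/-- The polytope `P(S) = {u : B(D(S))u = 0, 1ᵀu = 1, u ≥ 0}` of normalized
flows on `D(S)`. -/
def PS (q L : ℕ) (S : Finset (Fin (L + 1) → Fin q)) : Set ({z // z ∈ S} → ℝ) :=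
  {u | (∀ v : Fin L → Fin q,
          ∑ z : {z // z ∈ S},
            ((if suf q L z.1 = v then (1 : ℝ) else 0) -
              (if pre q L z.1 = v then 1 else 0)) * u z = 0) ∧
       (∑ z : {z // z ∈ S}, u z = 1) ∧ ∀ z, 0 ≤ u z}

/-!
A strictly positive point `u₀ ∈ P(S)` can be moved a little along every direction of
`ker A(S)` without leaving `P(S)`, so the affine span of `P(S)` is `u₀ + ker A(S)`. Such a point
exists because strong connectivity closes every arc into a cycle, and the sum of these cycles is a
circulation through every arc. Flows along walks also show that every vector on the nodes with
coordinate sum zero is in the range of `B(D(S))`; hence `A(S)` maps onto the hyperplane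
`{(x, t) | ∑ x = 0}`, has rank `|V(S)|`, and its nullity is `|S| - |V(S)|`.
-/

open Matrix Finset Filter Topology

theorem vectorSpan_eq_ker_of_exists_smul_mem {k M N : Type*} [Field k] [AddCommGroup M]
    [Module k M] [AddCommGroup N] [Module k N] {f : M →ₗ[k] N} {P : Set M} {y : N}
    (hP : P ⊆ f ⁻¹' {y}) {u₀ : M} (hu₀ : u₀ ∈ P)
    (hline : ∀ w ∈ LinearMap.ker f, ∃ ε : k, ε ≠ 0 ∧ u₀ + ε • w ∈ P) :
    vectorSpan k P = LinearMap.ker f := by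
  apply le_antisymm
  · rw [vectorSpan_def, Submodule.span_le]
    rintro _ ⟨u, hu, u', hu', rfl⟩
    have hfu : f u = y := hP hu
    have hfu' : f u' = y := hP hu'
    simp [hfu, hfu']
  · intro w hw
    obtain ⟨ε, hε, hmem⟩ := hline w hw
    have := (vectorSpan k P).smul_mem ε⁻¹ (vsub_mem_vectorSpan k hmem hu₀)
    rwa [vsub_eq_sub, add_sub_cancel_left, smul_smul, inv_mul_cancel₀ hε, one_smul] at this

theorem exists_ne_zero_forall_pos_add_smul {E : Type*} [Finite E] {u : E → ℝ}
    (hu : ∀ e, 0 < u e) (w : E → ℝ) :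
    ∃ ε : ℝ, ε ≠ 0 ∧ ∀ e, 0 < (u + ε • w) e := by
  have hpos : ∀ᶠ ε in 𝓝[≠] (0 : ℝ), ∀ e, 0 < (u + ε • w) e := by
    refine eventually_all.2 fun e => eventually_nhdsWithin_of_eventually_nhds ?_
    have hlim : Tendsto (fun ε : ℝ => (u + ε • w) e) (𝓝 0) (𝓝 (u e)) := by
      have hcont : Continuous fun ε : ℝ => (u + ε • w) e := by fun_prop
      simpa using hcont.tendsto 0
    exact hlim.eventually (lt_mem_nhds (hu e))
  exact (hpos.and self_mem_nhdsWithin).exists.imp fun ε h => ⟨h.2, h.1⟩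

section FlowPolytope

variable {E V : Type*} [Fintype E] [DecidableEq V] (src tgt : E → V)

def incidenceMatrix : Matrix V E ℝ :=
  Matrix.of fun v e => (if tgt e = v then 1 else 0) - (if src e = v then 1 else 0)

def augmentedIncidenceMatrix : Matrix (V ⊕ Unit) E ℝ :=
  fromRows (incidenceMatrix src tgt) (Matrix.of fun _ _ => 1)

def ArcAdj (a b : V) : Prop := ∃ e, src e = a ∧ tgt e = b

def flowPolytope : Set (E → ℝ) :=
  {u | incidenceMatrix src tgt *ᵥ u = 0 ∧ ∑ e, u e = 1 ∧ ∀ e, 0 ≤ u e}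

theorem incidenceMatrix_mulVec_single [DecidableEq E] (e : E) :
    incidenceMatrix src tgt *ᵥ Pi.single e 1 = Pi.single (tgt e) 1 - Pi.single (src e) 1 := by
  ext v
  simp [incidenceMatrix, Pi.single_apply, eq_comm]

theorem sum_incidenceMatrix_mulVec [Fintype V] (u : E → ℝ) :
    ∑ v, (incidenceMatrix src tgt *ᵥ u) v = 0 := by
  simp only [mulVec, dotProduct, incidenceMatrix, of_apply]
  rw [Finset.sum_comm]
  simp [sub_mul, ite_mul]

theorem augmentedIncidenceMatrix_mulVec (u : E → ℝ) :
    augmentedIncidenceMatrix src tgt *ᵥ u =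
      Sum.elim (incidenceMatrix src tgt *ᵥ u) (fun _ => ∑ e, u e) := by
  rw [augmentedIncidenceMatrix, fromRows_mulVec]
  congr 1
  ext
  simp [mulVec, dotProduct]

theorem mem_flowPolytope_iff (u : E → ℝ) :
    u ∈ flowPolytope src tgt ↔
      augmentedIncidenceMatrix src tgt *ᵥ u = Sum.elim (0 : V → ℝ) 1 ∧
        ∀ e, 0 ≤ u e := by
  simp [flowPolytope, augmentedIncidenceMatrix_mulVec, funext_iff, and_assoc]

theorem exists_nonneg_incidenceMatrix_mulVec_eq {a b : V}
    (h : Relation.ReflTransGen (ArcAdj src tgt) a b) :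
    ∃ u : E → ℝ, 0 ≤ u ∧
      incidenceMatrix src tgt *ᵥ u = Pi.single b 1 - Pi.single a 1 := by
  classical
  induction h with
  | refl => exact ⟨0, le_rfl, by simp⟩
  | tail _ hbc ih =>
    obtain ⟨u, hu, hBu⟩ := ih
    obtain ⟨e, rfl, rfl⟩ := hbc
    refine ⟨u + Pi.single e 1, add_nonneg hu (Pi.single_nonneg.2 zero_le_one), ?_⟩
    rw [mulVec_add, hBu, incidenceMatrix_mulVec_single]
    abel

variable {src tgt}

theorem exists_pos_incidenceMatrix_mulVec_eq_zero
    (hconn : ∀ a b, Relation.ReflTransGen (ArcAdj src tgt) a b) :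
    ∃ c : E → ℝ, (∀ e, 0 < c e) ∧ incidenceMatrix src tgt *ᵥ c = 0 := by
  classical
  choose f hf₀ hf using fun e =>
    exists_nonneg_incidenceMatrix_mulVec_eq src tgt (hconn (tgt e) (src e))
  -- each arc `e`, closed up by a walk `f e` back from its head, is a nonnegative circulation
  have hcirc : ∀ e, 0 ≤ Pi.single e 1 + f e ∧
      incidenceMatrix src tgt *ᵥ (Pi.single e 1 + f e) = 0 :=
    fun e => ⟨add_nonneg (Pi.single_nonneg.2 zero_le_one) (hf₀ e), by
      rw [mulVec_add, hf, incidenceMatrix_mulVec_single]; abel⟩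
  refine ⟨∑ e, (Pi.single e 1 + f e), fun e => ?_, by simp [mulVec_sum, hcirc]⟩
  calc (0 : ℝ) < (Pi.single e 1 + f e : E → ℝ) e := by
        simpa using add_pos_of_pos_of_nonneg one_pos (hf₀ e e)
    _ ≤ (∑ e', (Pi.single e' 1 + f e') : E → ℝ) e := by
      rw [Finset.sum_apply]
      exact single_le_sum (fun e' _ => (hcirc e').1 e) (mem_univ e)

theorem exists_pos_mem_flowPolytope [Nonempty E]
    (hconn : ∀ a b, Relation.ReflTransGen (ArcAdj src tgt) a b) :
    ∃ u ∈ flowPolytope src tgt, ∀ e, 0 < u e := by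
  obtain ⟨c, hc, hBc⟩ := exists_pos_incidenceMatrix_mulVec_eq_zero hconn
  have hsum : 0 < ∑ e, c e := sum_pos (fun e _ => hc e) univ_nonempty
  refine ⟨(∑ e, c e)⁻¹ • c, ⟨?_, ?_, fun e => ?_⟩, fun e => ?_⟩
  · rw [mulVec_smul, hBc, smul_zero]
  · simp [← mul_sum, hsum.ne']
  · exact (smul_pos (inv_pos.2 hsum) (hc e)).le
  · exact smul_pos (inv_pos.2 hsum) (hc e)

theorem mem_range_incidenceMatrix_mulVecLin [Fintype V]
    (hconn : ∀ a b, Relation.ReflTransGen (ArcAdj src tgt) a b) {x : V → ℝ}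
    (hx : ∑ v, x v = 0) : x ∈ LinearMap.range (incidenceMatrix src tgt).mulVecLin := by
  rcases isEmpty_or_nonempty V with hV | ⟨⟨a⟩⟩
  · simp [Subsingleton.elim x 0]
  have hx' : x = ∑ v, x v • (Pi.single v 1 - Pi.single a 1) := by
    simp only [smul_sub, sum_sub_distrib, ← sum_smul, hx, zero_smul, sub_zero]
    ext w
    simp [Pi.single_apply]
  rw [hx']
  refine Submodule.sum_mem _ fun v _ => Submodule.smul_mem _ _ ?_
  obtain ⟨u, -, hu⟩ := exists_nonneg_incidenceMatrix_mulVec_eq src tgt (hconn a v)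
  exact ⟨u, hu⟩

theorem range_augmentedIncidenceMatrix_mulVecLin [Fintype V] [Nonempty E]
    (hconn : ∀ a b, Relation.ReflTransGen (ArcAdj src tgt) a b) :
    LinearMap.range (augmentedIncidenceMatrix src tgt).mulVecLin =
      LinearMap.ker (∑ v, LinearMap.proj (Sum.inl v) : (V ⊕ Unit → ℝ) →ₗ[ℝ] ℝ) := by
  apply le_antisymm
  · rintro _ ⟨u, rfl⟩
    simp [augmentedIncidenceMatrix_mulVec, sum_incidenceMatrix_mulVec]
  · intro y hy
    obtain ⟨u₀, hu₀, -⟩ := exists_pos_mem_flowPolytope hconn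
    obtain ⟨w, hw⟩ :=
      mem_range_incidenceMatrix_mulVecLin hconn (x := y ∘ Sum.inl) (by simpa using hy)
    refine ⟨w + (y (Sum.inr ()) - ∑ e, w e) • u₀, ?_⟩
    have hAu₀ := ((mem_flowPolytope_iff src tgt u₀).1 hu₀).1
    ext (v | ⟨⟩)
    · simpa [mulVec_add, mulVec_smul, hAu₀, augmentedIncidenceMatrix_mulVec] using congrFun hw v
    · simp [mulVec_add, mulVec_smul, hAu₀, augmentedIncidenceMatrix_mulVec]

theorem rank_augmentedIncidenceMatrix [Fintype V] [Nonempty E]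
    (hconn : ∀ a b, Relation.ReflTransGen (ArcAdj src tgt) a b) :
    (augmentedIncidenceMatrix src tgt).rank = Fintype.card V := by
  rw [Matrix.rank, range_augmentedIncidenceMatrix_mulVecLin hconn]
  set ψ : (V ⊕ Unit → ℝ) →ₗ[ℝ] ℝ := ∑ v, LinearMap.proj (Sum.inl v)
  obtain ⟨v₀⟩ : Nonempty V := .map src ‹_›
  have hψ : LinearMap.range ψ = ⊤ := by
    refine LinearMap.range_eq_top.2 fun r => ⟨Sum.elim (Pi.single v₀ r) 0, ?_⟩
    simp [ψ, Pi.single_apply]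
  have := LinearMap.finrank_range_add_finrank_ker ψ
  rw [hψ, finrank_top, Module.finrank_self, Module.finrank_fintype_fun_eq_card,
    Fintype.card_sum, Fintype.card_unit] at this
  omega

theorem vectorSpan_flowPolytope [Nonempty E]
    (hconn : ∀ a b, Relation.ReflTransGen (ArcAdj src tgt) a b) :
    vectorSpan ℝ (flowPolytope src tgt) =
      LinearMap.ker (augmentedIncidenceMatrix src tgt).mulVecLin := by
  obtain ⟨u₀, hu₀, hpos⟩ := exists_pos_mem_flowPolytope hconn
  refine vectorSpan_eq_ker_of_exists_smul_mem (y := Sum.elim 0 1)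
    (fun u hu => ((mem_flowPolytope_iff src tgt u).1 hu).1) hu₀ fun w hw => ?_
  obtain ⟨ε, hε, hεpos⟩ := exists_ne_zero_forall_pos_add_smul hpos w
  refine ⟨ε, hε, (mem_flowPolytope_iff src tgt _).2 ⟨?_, fun e => (hεpos e).le⟩⟩
  rw [LinearMap.mem_ker, mulVecLin_apply] at hw
  rw [mulVec_add, mulVec_smul, hw, smul_zero, add_zero,
    ((mem_flowPolytope_iff src tgt u₀).1 hu₀).1]

theorem finrank_direction_affineSpan_flowPolytope [Fintype V]
    (hconn : ∀ a b, Relation.ReflTransGen (ArcAdj src tgt) a b) :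
    Module.finrank ℝ (affineSpan ℝ (flowPolytope src tgt)).direction =
      Fintype.card E - Fintype.card V := by
  rcases isEmpty_or_nonempty E with hE | hE
  · have : flowPolytope src tgt = ∅ := by
      ext u
      simp [flowPolytope]
    simp [this]
  have := LinearMap.finrank_range_add_finrank_ker (augmentedIncidenceMatrix src tgt).mulVecLin
  rw [Module.finrank_fintype_fun_eq_card, ← Matrix.rank,
    rank_augmentedIncidenceMatrix hconn] at this
  rw [direction_affineSpan, vectorSpan_flowPolytope hconn]
  omega

end FlowPolytope

section DeBruijn

variable (q L : ℕ) (S : Finset (Fin (L + 1) → Fin q))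

def deBruijnSrc (z : {z // z ∈ S}) : {v // v ∈ VS q L S} :=
  ⟨pre q L z, mem_union_left _ (mem_image_of_mem _ z.2)⟩

def deBruijnTgt (z : {z // z ∈ S}) : {v // v ∈ VS q L S} :=
  ⟨suf q L z, mem_union_right _ (mem_image_of_mem _ z.2)⟩

variable {q L S}

theorem exists_reflTransGen_arcAdj_of_step {a b : Fin L → Fin q} (ha : a ∈ VS q L S)
    (h : Relation.ReflTransGen (step q L S) a b) :
    ∃ hb : b ∈ VS q L S, Relation.ReflTransGen
      (ArcAdj (deBruijnSrc q L S) (deBruijnTgt q L S)) ⟨a, ha⟩ ⟨b, hb⟩ := by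
  induction h with
  | refl => exact ⟨ha, .refl⟩
  | tail _ hbc ih =>
    obtain ⟨z, hz, rfl, rfl⟩ := hbc
    obtain ⟨_, ih⟩ := ih
    exact ⟨(deBruijnTgt q L S ⟨z, hz⟩).2, ih.tail ⟨⟨z, hz⟩, rfl, rfl⟩⟩

variable (q L S)

theorem PS_eq_flowPolytope :
    PS q L S = flowPolytope (deBruijnSrc q L S) (deBruijnTgt q L S) := by
  ext u
  refine and_congr ⟨fun h => funext fun v => ?_, fun h v => ?_⟩ .rfl
  · simpa [incidenceMatrix, mulVec, dotProduct, deBruijnSrc, deBruijnTgt, Subtype.ext_iff]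
      using h v
  · by_cases hv : v ∈ VS q L S
    · simpa [incidenceMatrix, mulVec, dotProduct, deBruijnSrc, deBruijnTgt, Subtype.ext_iff]
        using congrFun h ⟨v, hv⟩
    · refine sum_eq_zero fun z _ => ?_
      have hpre : pre q L z ≠ v := fun h => hv (h ▸ (deBruijnSrc q L S z).2)
      have hsuf : suf q L z ≠ v := fun h => hv (h ▸ (deBruijnTgt q L S z).2)
      simp [hpre, hsuf]

end DeBruijn

/-- If `D(S)` is strongly connected, the polytope `P(S)` has dimension
`|S| - |V(S)|`. -/
theorem dim_PS (q L : ℕ) (S : Finset (Fin (L + 1) → Fin q))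
    (hconn : ∀ a ∈ VS q L S, ∀ b ∈ VS q L S,
      Relation.ReflTransGen (step q L S) a b) :
    Module.finrank ℝ (affineSpan ℝ (PS q L S)).direction =
      S.card - (VS q L S).card := by
  rw [PS_eq_flowPolytope, finrank_direction_affineSpan_flowPolytope, Fintype.card_coe,
    Fintype.card_coe]
  rintro ⟨a, ha⟩ ⟨b, hb⟩
  exact (exists_reflTransGen_arcAdj_of_step ha (hconn a ha b hb)).2
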